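/- arXiv:1510.01271 — 2 statements merged into one kernel-verified Lean document; each statement's English description precedes it below -/
import Mathlib

section
/- For m, n ≥ 3, the strong product P_m ⊠ P_n has exactly (m−2)(n−2) vertices of degree 8, exactly 2(m+n−4) vertices of degree 5, and exactly 4 vertices of degree 3; hence cn(P_m ⊠ P_n) = max{2(m+n−4), (m−2)(n−2)} and cn^c(P_m ⊠ P_n) = 8(m−2)(n−2)(m+n−4), which equals cn^c(P_m □ P_n). -/
open scoped Classical

/-- Number of vertices of `G` having degree `d`. -/
noncomputable def degCount {V : Type*} [Fintype V] (G : SimpleGraph V) (d : ℕ) : ℕ :=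
  (Finset.univ.filter (fun v => G.degree v = d)).card

/-- The curling number of a graph: the maximal multiplicity of a degree value. -/
noncomputable def curl {V : Type*} [Fintype V] (G : SimpleGraph V) : ℕ :=
  (Finset.univ.image (fun v => G.degree v)).sup (degCount G)

/-- The compound curling number: product of multiplicities of the distinct degree values. -/
noncomputable def curlc {V : Type*} [Fintype V] (G : SimpleGraph V) : ℕ :=
  ∏ d ∈ Finset.univ.image (fun v => G.degree v), degCount G d

/-- The strong product of two graphs. -/
def strongProd {V W : Type*} (G : SimpleGraph V) (H : SimpleGraph W) : SimpleGraph (V × W) where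
  Adj x y := x ≠ y ∧ (G.Adj x.1 y.1 ∨ x.1 = y.1) ∧ (H.Adj x.2 y.2 ∨ x.2 = y.2)
  symm := ⟨fun x y h => ⟨h.1.symm, h.2.1.imp (G.adj_symm) Eq.symm, h.2.2.imp (H.adj_symm) Eq.symm⟩⟩
  loopless := ⟨fun x h => h.1 rfl⟩

/-!
Closed neighbourhoods multiply in the strong product, so a vertex `(v, w)` of `G ⊠ H` has degree
`(d v + 1) (d w + 1) - 1`, while in `G □ H` it has degree `d v + d w`. The number of vertices of a
given degree in either product is therefore a convolution of the degree counts of the factors. A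
path on `m ≥ 3` vertices has two vertices of degree 1 and `m - 2` of degree 2, so both `P_m ⊠ P_n`
and `P_m □ P_n` have exactly three degree values, taken by `4`, `2 (m + n - 4)` and
`(m - 2) (n - 2)` vertices.
-/

open Finset SimpleGraph

@[simp]
lemma strongProd_adj {V W : Type*} {G : SimpleGraph V} {H : SimpleGraph W} {x y : V × W} :
    (strongProd G H).Adj x y ↔
      x ≠ y ∧ (G.Adj x.1 y.1 ∨ x.1 = y.1) ∧ (H.Adj x.2 y.2 ∨ x.2 = y.2) :=
  Iff.rfl

lemma strongProd_degree {V W : Type*} [Fintype V] [Fintype W] (G : SimpleGraph V)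
    (H : SimpleGraph W) (x : V × W) :
    (strongProd G H).degree x = (G.degree x.1 + 1) * (H.degree x.2 + 1) - 1 := by
  have : (strongProd G H).neighborFinset x =
      (insert x.1 (G.neighborFinset x.1) ×ˢ insert x.2 (H.neighborFinset x.2)).erase x := by
    ext ⟨v, w⟩
    simp only [mem_neighborFinset, strongProd_adj, mem_erase, mem_product, mem_insert, ne_eq]
    tauto
  rw [degree, this, card_erase_of_mem (by simp), card_product,
    card_insert_of_notMem (notMem_neighborFinset_self _ _),
    card_insert_of_notMem (notMem_neighborFinset_self _ _), degree, degree]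

section ProductDegrees

variable {V W : Type*} [Fintype V] [Fintype W] {G : SimpleGraph V} {H : SimpleGraph W}
  {K : SimpleGraph (V × W)} {F : ℕ → ℕ → ℕ}

lemma image_degree_eq_image₂ (hK : ∀ x, K.degree x = F (G.degree x.1) (H.degree x.2)) :
    univ.image (fun x => K.degree x) =
      image₂ F (univ.image fun v => G.degree v) (univ.image fun w => H.degree w) := by
  ext d
  simp [hK]

lemma degCount_eq_sum (hK : ∀ x, K.degree x = F (G.degree x.1) (H.degree x.2)) (d : ℕ) :
    degCount K d = ∑ a ∈ univ.image (fun v => G.degree v), ∑ b ∈ univ.image (fun w => H.degree w),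
      if F a b = d then degCount G a * degCount H b else 0 := by
  calc degCount K d = ∑ v, ∑ w, if F (G.degree v) (H.degree w) = d then 1 else 0 := by
        rw [degCount, card_filter, ← univ_product_univ, sum_product]
        simp only [hK]
    _ = _ := by
        rw [sum_comp fun a => ∑ w, if F a (H.degree w) = d then 1 else 0]
        refine sum_congr rfl fun a _ => ?_
        rw [sum_comp fun b => if F a b = d then 1 else 0, smul_sum]
        refine sum_congr rfl fun b _ => ?_
        split_ifs <;> simp [degCount, mul_comm]

end ProductDegrees

section PathGraph

variable {m : ℕ}

lemma pathGraph_degree (hm : 2 ≤ m) (i : Fin m) :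
    (pathGraph m).degree i = if (i : ℕ) = 0 ∨ (i : ℕ) = m - 1 then 1 else 2 := by
  rw [degree, neighborFinset_eq_filter]
  by_cases h0 : (i : ℕ) = 0
  · have : ({j | (pathGraph m).Adj i j} : Finset (Fin m)) = {⟨1, by omega⟩} := by
      ext j; simp [pathGraph_adj, Fin.ext_iff]; omega
    simp [this, h0]
  by_cases h1 : (i : ℕ) = m - 1
  · have : ({j | (pathGraph m).Adj i j} : Finset (Fin m)) = {⟨m - 2, by omega⟩} := by
      ext j; simp [pathGraph_adj, Fin.ext_iff]; omega
    simp [this, h1]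
  · have : ({j | (pathGraph m).Adj i j} : Finset (Fin m)) =
        {⟨i - 1, by omega⟩, ⟨i + 1, by omega⟩} := by
      ext j; simp [pathGraph_adj, Fin.ext_iff]; omega
    rw [this, card_pair (by simp [Fin.ext_iff])]
    simp [h0, h1]

lemma degCount_pathGraph_one (hm : 2 ≤ m) : degCount (pathGraph m) 1 = 2 := by
  have : ({i | (pathGraph m).degree i = 1} : Finset (Fin m)) =
      {⟨0, by omega⟩, ⟨m - 1, by omega⟩} := by
    ext i; simp [pathGraph_degree hm, Fin.ext_iff]; omega
  rw [degCount, this, card_pair (by simp [Fin.ext_iff]; omega)]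

lemma degCount_pathGraph_two (hm : 2 ≤ m) : degCount (pathGraph m) 2 = m - 2 := by
  have : ({i | (pathGraph m).degree i = 2} : Finset (Fin m)) =
      ({i | (pathGraph m).degree i = 1} : Finset (Fin m))ᶜ := by
    ext i; simp [pathGraph_degree hm]
  rw [degCount, this, card_compl, ← degCount, degCount_pathGraph_one hm, Fintype.card_fin]

lemma image_degree_pathGraph (hm : 3 ≤ m) :
    univ.image (fun i => (pathGraph m).degree i) = {1, 2} := by
  ext d
  simp only [mem_image, mem_univ, true_and, pathGraph_degree (by omega : 2 ≤ m), mem_insert,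
    mem_singleton]
  constructor
  · rintro ⟨i, rfl⟩
    split_ifs <;> simp
  · rintro (rfl | rfl)
    · exact ⟨⟨0, by omega⟩, by simp⟩
    · exact ⟨⟨1, by omega⟩, by simp; omega⟩

end PathGraph

section PathProducts

variable {m n : ℕ} {K : SimpleGraph (Fin m × Fin n)} (F : ℕ → ℕ → ℕ)

lemma image_degree_of_pathGraph_factors (hm : 3 ≤ m) (hn : 3 ≤ n)
    (hK : ∀ x, K.degree x = F ((pathGraph m).degree x.1) ((pathGraph n).degree x.2)) :
    univ.image (fun x => K.degree x) = {F 1 1, F 1 2, F 2 1, F 2 2} := by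
  rw [image_degree_eq_image₂ hK, image_degree_pathGraph hm, image_degree_pathGraph hn]
  ext d
  simp only [image₂_insert_left, image₂_singleton_left, image_insert, image_singleton, mem_union,
    mem_insert, mem_singleton]
  tauto

lemma degCount_of_pathGraph_factors (hm : 3 ≤ m) (hn : 3 ≤ n)
    (hK : ∀ x, K.degree x = F ((pathGraph m).degree x.1) ((pathGraph n).degree x.2)) (d : ℕ) :
    degCount K d = (if F 1 1 = d then 4 else 0) + (if F 1 2 = d then 2 * (n - 2) else 0) +
      (if F 2 1 = d then 2 * (m - 2) else 0) + (if F 2 2 = d then (m - 2) * (n - 2) else 0) := by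
  rw [degCount_eq_sum hK, image_degree_pathGraph hm, image_degree_pathGraph hn]
  simp [degCount_pathGraph_one (by omega : 2 ≤ m), degCount_pathGraph_one (by omega : 2 ≤ n),
    degCount_pathGraph_two (by omega : 2 ≤ m), degCount_pathGraph_two (by omega : 2 ≤ n)]
  simp only [add_assoc, mul_comm (m - 2) 2]

end PathProducts

theorem stmt16 (m n : ℕ) (hm : 3 ≤ m) (hn : 3 ≤ n) :
    degCount (strongProd (SimpleGraph.pathGraph m) (SimpleGraph.pathGraph n)) 8
      = (m - 2) * (n - 2) ∧
    degCount (strongProd (SimpleGraph.pathGraph m) (SimpleGraph.pathGraph n)) 5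
      = 2 * (m + n - 4) ∧
    degCount (strongProd (SimpleGraph.pathGraph m) (SimpleGraph.pathGraph n)) 3 = 4 ∧
    curl (strongProd (SimpleGraph.pathGraph m) (SimpleGraph.pathGraph n)) =
      max (2 * (m + n - 4)) ((m - 2) * (n - 2)) ∧
    curlc (strongProd (SimpleGraph.pathGraph m) (SimpleGraph.pathGraph n)) =
      8 * (m - 2) * (n - 2) * (m + n - 4) ∧
    curlc (strongProd (SimpleGraph.pathGraph m) (SimpleGraph.pathGraph n)) =
      curlc ((SimpleGraph.pathGraph m).boxProd (SimpleGraph.pathGraph n)) := by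
  have strongCount := degCount_of_pathGraph_factors (fun a b => (a + 1) * (b + 1) - 1) hm hn
    (strongProd_degree (pathGraph m) (pathGraph n))
  have strongImage := image_degree_of_pathGraph_factors (fun a b => (a + 1) * (b + 1) - 1) hm hn
    (strongProd_degree (pathGraph m) (pathGraph n))
  -- `degree_boxProd` is stated for the product's own `Fintype` instance on neighbour sets, not the
  -- classical one inside `degCount`.
  have boxCount := degCount_of_pathGraph_factors (· + ·) hm hn (K := pathGraph m □ pathGraph n)
    fun x => by convert degree_boxProd x
  have boxImage := image_degree_of_pathGraph_factors (· + ·) hm hn (K := pathGraph m □ pathGraph n)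
    fun x => by convert degree_boxProd x
  norm_num at strongCount strongImage boxCount boxImage
  have count8 : degCount (strongProd (pathGraph m) (pathGraph n)) 8 = (m - 2) * (n - 2) := by
    simp [strongCount]
  have count5 : degCount (strongProd (pathGraph m) (pathGraph n)) 5 = 2 * (m + n - 4) := by
    simp [strongCount]; omega
  have count3 : degCount (strongProd (pathGraph m) (pathGraph n)) 3 = 4 := by
    simp [strongCount]
  have hcurlc : curlc (strongProd (pathGraph m) (pathGraph n)) =
      8 * (m - 2) * (n - 2) * (m + n - 4) := by
    simp [curlc, strongImage, count3, count5, count8]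
    ring
  refine ⟨count8, count5, count3, ?_, hcurlc, ?_⟩
  · simp [curl, strongImage, count3, count5, count8]
    omega
  · rw [hcurlc, curlc, boxImage]
    simp [boxCount, show m + n - 4 = (m - 2) + (n - 2) by omega]
    ring
end

section
/- Let G₁(V₁,E₁) and G₂(V₂,E₂) be nonempty finite graphs, both r₁- and r₂-regular respectively. Then the corona G₁ ⊙ G₂ satisfies: cn(G₁ ⊙ G₂) = |V₁|(1+|V₂|) if r₁ + |V₂| = 1 + r₂, and cn(G₁ ⊙ G₂) = |V₁|·|V₂| otherwise. -/
open scoped Classical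

/-- The corona of two graphs: one copy of `G` and `|V|` copies of `H`, the `i`-th
vertex of `G` joined to every vertex of the `i`-th copy of `H`. -/
def corona {V W : Type*} (G : SimpleGraph V) (H : SimpleGraph W) : SimpleGraph (V ⊕ V × W) where
  Adj x y := match x, y with
    | .inl a, .inl b => G.Adj a b
    | .inr a, .inr b => a.1 = b.1 ∧ H.Adj a.2 b.2
    | .inl a, .inr b => a = b.1
    | .inr a, .inl b => b = a.1
  symm := by
    constructor
    rintro (a | a) (b | b) h
    · exact G.adj_symm h
    · exact h
    · exact h
    · exact ⟨h.1.symm, H.adj_symm h.2⟩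
  loopless := by
    constructor
    rintro (a | a) h
    · exact G.irrefl h
    · exact H.irrefl h.2

/-! In `G₁ ⊙ G₂` the vertices of `G₁` all have degree `r₁ + |V₂|` and the `|V₁| |V₂|` vertices of
the copies of `G₂` all have degree `r₂ + 1`. So there are at most two degree classes: if the two
values agree the corona is regular and its curling number is its order `|V₁| (1 + |V₂|)`,
otherwise it is the larger class size `max |V₁| (|V₁| |V₂|) = |V₁| |V₂|`. -/

namespace SimpleGraph

variable {V W : Type*} [Fintype V] [Fintype W] (G : SimpleGraph V) (H : SimpleGraph W)

theorem neighborFinset_corona_inl (a : V) :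
    (corona G H).neighborFinset (.inl a) =
      (G.neighborFinset a).disjSum (Finset.univ.map ⟨(a, ·), Prod.mk_right_injective a⟩) := by
  ext (b | ⟨c, w⟩) <;> simp only [mem_neighborFinset] <;> simp [corona, eq_comm]

theorem neighborFinset_corona_inr (p : V × W) :
    (corona G H).neighborFinset (.inr p) =
      ({p.1} : Finset V).disjSum
        ((H.neighborFinset p.2).map ⟨(p.1, ·), Prod.mk_right_injective p.1⟩) := by
  ext (b | ⟨c, w⟩) <;> simp only [mem_neighborFinset] <;> simp [corona, and_comm, eq_comm]

theorem degree_corona_inl (a : V) :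
    (corona G H).degree (.inl a) = G.degree a + Fintype.card W := by
  rw [← card_neighborFinset_eq_degree, neighborFinset_corona_inl, Finset.card_disjSum,
    card_neighborFinset_eq_degree, Finset.card_map, Finset.card_univ]

theorem degree_corona_inr (p : V × W) :
    (corona G H).degree (.inr p) = H.degree p.2 + 1 := by
  rw [← card_neighborFinset_eq_degree, neighborFinset_corona_inr, Finset.card_disjSum,
    Finset.card_map, card_neighborFinset_eq_degree, Finset.card_singleton, add_comm]

end SimpleGraph

section curl

variable {V : Type*} [Fintype V] (G : SimpleGraph V)

theorem degCount_eq_zero_of_notMem_image {d : ℕ}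
    (hd : d ∉ Finset.univ.image (fun v => G.degree v)) : degCount G d = 0 := by
  simpa [degCount, Finset.filter_eq_empty_iff] using hd

theorem curl_eq_sup_of_image_subset {S : Finset ℕ}
    (hS : Finset.univ.image (fun v => G.degree v) ⊆ S) : curl G = S.sup (degCount G) := by
  refine le_antisymm (Finset.sup_mono hS) (Finset.sup_le fun d _ => ?_)
  by_cases hd : d ∈ Finset.univ.image (fun v => G.degree v)
  · exact Finset.le_sup hd
  · simp [degCount_eq_zero_of_notMem_image G hd]

theorem curl_eq_card_of_isRegularOfDegree {d : ℕ} (hG : G.IsRegularOfDegree d) :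
    curl G = Fintype.card V := by
  rw [curl_eq_sup_of_image_subset G (S := {d})
      (Finset.image_subset_iff.mpr fun v _ => Finset.mem_singleton.mpr (hG v)),
    Finset.sup_singleton, degCount]
  simp [hG _]

end curl

section curlSum

variable {α β : Type*} [Fintype α] [Fintype β] {G : SimpleGraph (α ⊕ β)} {d₁ d₂ : ℕ}

theorem degCount_sum (hl : ∀ a, G.degree (.inl a) = d₁) (hr : ∀ b, G.degree (.inr b) = d₂)
    (d : ℕ) : degCount G d =
      (if d₁ = d then Fintype.card α else 0) + (if d₂ = d then Fintype.card β else 0) := by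
  rw [degCount, Finset.card_filter, Fintype.sum_sum_type]
  simp only [hl, hr]
  split_ifs <;> simp

theorem curl_sum_eq_max (hl : ∀ a, G.degree (.inl a) = d₁) (hr : ∀ b, G.degree (.inr b) = d₂)
    (hd : d₁ ≠ d₂) : curl G = max (Fintype.card α) (Fintype.card β) := by
  have hS : Finset.univ.image (fun v => G.degree v) ⊆ {d₁, d₂} := by
    rintro _ h
    obtain ⟨a | b, -, rfl⟩ := Finset.mem_image.mp h <;> simp [hl, hr]
  rw [curl_eq_sup_of_image_subset G hS, Finset.sup_insert, Finset.sup_singleton,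
    degCount_sum hl hr, degCount_sum hl hr]
  simp [hd, hd.symm]

end curlSum

theorem stmt17_general {V₁ V₂ : Type*} [Fintype V₁] [Fintype V₂]
    [Nonempty V₂]
    (G₁ : SimpleGraph V₁) (G₂ : SimpleGraph V₂) (r₁ r₂ : ℕ)
    (h₁ : G₁.IsRegularOfDegree r₁) (h₂ : G₂.IsRegularOfDegree r₂) :
    (r₁ + Fintype.card V₂ = 1 + r₂ →
      curl (corona G₁ G₂) = Fintype.card V₁ * (1 + Fintype.card V₂)) ∧
    (r₁ + Fintype.card V₂ ≠ 1 + r₂ →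
      curl (corona G₁ G₂) = Fintype.card V₁ * Fintype.card V₂) := by
  have hl (a : V₁) : (corona G₁ G₂).degree (.inl a) = r₁ + Fintype.card V₂ := by
    rw [SimpleGraph.degree_corona_inl, h₁ a]
  have hr (p : V₁ × V₂) : (corona G₁ G₂).degree (.inr p) = 1 + r₂ := by
    rw [SimpleGraph.degree_corona_inr, h₂ p.2, add_comm]
  constructor
  · intro h
    have hreg : (corona G₁ G₂).IsRegularOfDegree (1 + r₂) := by
      rintro (a | p)
      · rw [hl, h]
      · exact hr p
    rw [curl_eq_card_of_isRegularOfDegree _ hreg, Fintype.card_sum, Fintype.card_prod]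
    ring
  · intro h
    rw [curl_sum_eq_max hl hr h, Fintype.card_prod]
    exact max_eq_right (Nat.le_mul_of_pos_right _ Fintype.card_pos)

theorem stmt17 {V₁ V₂ : Type*} [Fintype V₁] [Fintype V₂]
    [Nonempty V₁] [Nonempty V₂]
    (G₁ : SimpleGraph V₁) (G₂ : SimpleGraph V₂) (r₁ r₂ : ℕ)
    (h₁ : G₁.IsRegularOfDegree r₁) (h₂ : G₂.IsRegularOfDegree r₂) :
    (r₁ + Fintype.card V₂ = 1 + r₂ →
      curl (corona G₁ G₂) = Fintype.card V₁ * (1 + Fintype.card V₂)) ∧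
    (r₁ + Fintype.card V₂ ≠ 1 + r₂ →
      curl (corona G₁ G₂) = Fintype.card V₁ * Fintype.card V₂) :=
  stmt17_general G₁ G₂ r₁ r₂ h₁ h₂
end
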